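/- arXiv:2009.06934 — 3 statements merged into one kernel-verified Lean document; each statement's English description precedes it below -/
import Mathlib

section
/- Let A be a vector space with two increasing exhaustive filtrations F₁, F₂ (each with F^{(-1)} = 0), and let U ⊆ A be a vector subspace. If gr₁₂ U ⊆ gr₂₁ U as subspaces of the associated bigraded space bigr A, then gr₁₂ U = gr₂₁ U. -/
/-- `Fprev F i` is `F (i-1)`, with the convention `F (-1) = ⊥`. -/
def Fprev {K M : Type*} [Field K] [AddCommGroup M] [Module K M]
    (F : ℕ → Submodule K M) : ℕ → Submodule K M
  | 0 => ⊥
  | (i + 1) => F i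

/-- The subspace of representatives (inside `F₁⁽ⁱ⁾ ∩ F₂⁽ʲ⁾`) of the
`(i,j)`-component of `gr₂ gr₁ U` viewed inside the bigraded component
`(F₁⁽ⁱ⁾ ∩ F₂⁽ʲ⁾)/(F₁⁽ⁱ⁻¹⁾ ∩ F₂⁽ʲ⁾ + F₁⁽ⁱ⁾ ∩ F₂⁽ʲ⁻¹⁾)`: an element
`a ∈ F₁⁽ⁱ⁾ ∩ F₂⁽ʲ⁾` represents a class in the image of `U` iff
`a ∈ (U ∩ F₁⁽ⁱ⁾) + F₁⁽ⁱ⁻¹⁾ + F₁⁽ⁱ⁾ ∩ F₂⁽ʲ⁻¹⁾`.  Note that this subspace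
contains the denominator `F₁⁽ⁱ⁻¹⁾ ∩ F₂⁽ʲ⁾ + F₁⁽ⁱ⁾ ∩ F₂⁽ʲ⁻¹⁾`, so comparing
these subspaces of `A` is the same as comparing the images in `bigr A`. -/
def grRep {K A : Type*} [Field K] [AddCommGroup A] [Module K A]
    (F1 F2 : ℕ → Submodule K A) (U : Submodule K A) (i j : ℕ) :
    Submodule K A :=
  (F1 i ⊓ F2 j) ⊓ ((U ⊓ F1 i) ⊔ Fprev F1 i ⊔ (F1 i ⊓ Fprev F2 j))

/-- Let `A` be a vector space with two increasing exhaustive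
filtrations `F₁`, `F₂` and `U ⊆ A` a subspace.  If `gr₁₂ U ⊆ gr₂₁ U` as
subspaces of the associated bigraded space `bigr A` (expressed on
representatives: `grRep F2 F1 U j i ≤ grRep F1 F2 U i j` for all `i`, `j`),
then `gr₁₂ U = gr₂₁ U`. -/
theorem statement1 {K A : Type*} [Field K] [AddCommGroup A] [Module K A]
    (F1 F2 : ℕ → Submodule K A) (U : Submodule K A)
    (hF1mono : Monotone F1) (hF2mono : Monotone F2)
    (hF1exh : ⨆ i, F1 i = ⊤) (hF2exh : ⨆ j, F2 j = ⊤)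
    (h : ∀ i j : ℕ, grRep F2 F1 U j i ≤ grRep F1 F2 U i j) :
    ∀ i j : ℕ, grRep F2 F1 U j i = grRep F1 F2 U i j := by
  classical
  -- basic facts about `Fprev`
  have hprev1 : ∀ i, Fprev F1 i ≤ F1 i := by
    intro i
    cases i with
    | zero => exact bot_le
    | succ n => exact hF1mono (Nat.le_succ n)
  have hprev2 : ∀ j, Fprev F2 j ≤ F2 j := by
    intro j
    cases j with
    | zero => exact bot_le
    | succ n => exact hF2mono (Nat.le_succ n)
  -- exhaustiveness of F2, elementwise
  have exh2 : ∀ x : A, ∃ m, x ∈ F2 m := by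
    intro x
    have hx : x ∈ (⨆ j, F2 j) := by rw [hF2exh]; exact Submodule.mem_top
    exact (Submodule.mem_iSup_of_directed _ hF2mono.directed_le).mp hx
  -- The auxiliary step deriving R' i from R i and "R' (i-1)" (suitably phrased).
  -- R i j  : x ∈ U → x ∈ F1 i → x ∈ F2 j ⊔ Fprev F1 i →
  --            x ∈ (U ⊓ F1 i ⊓ F2 j) ⊔ (U ⊓ Fprev F1 i)
  -- R' i j : x ∈ U → x ∈ F2 j → x ∈ F1 i ⊔ Fprev F2 j →
  --            x ∈ (U ⊓ F1 i ⊓ F2 j) ⊔ (U ⊓ Fprev F2 j)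
  have rprime_aux : ∀ i : ℕ,
      (∀ j (x : A), x ∈ U → x ∈ F1 i → x ∈ F2 j ⊔ Fprev F1 i →
        x ∈ (U ⊓ F1 i ⊓ F2 j) ⊔ (U ⊓ Fprev F1 i)) →
      (∀ j (x : A), x ∈ U → x ∈ F2 j → x ∈ Fprev F1 i ⊔ Fprev F2 j →
        x ∈ (U ⊓ F1 i ⊓ F2 j) ⊔ (U ⊓ Fprev F2 j)) →
      (∀ j (x : A), x ∈ U → x ∈ F2 j → x ∈ F1 i ⊔ Fprev F2 j →
        x ∈ (U ⊓ F1 i ⊓ F2 j) ⊔ (U ⊓ Fprev F2 j)) := by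
    intro i hR hPrev j x hxU hxQ hxmix
    obtain ⟨g, hg1, s, hs, hgs⟩ := Submodule.mem_sup.mp hxmix
    -- g ∈ F1 i, s ∈ Fprev F2 j, g + s = x
    have hgQ : g ∈ F2 j := by
      have hgeq : g = x - s := by rw [← hgs]; abel
      rw [hgeq]; exact sub_mem hxQ (hprev2 j hs)
    -- g represents a class of gr₁₂ U
    have hgrep : g ∈ grRep F2 F1 U j i := by
      refine Submodule.mem_inf.mpr ⟨Submodule.mem_inf.mpr ⟨hgQ, hg1⟩, ?_⟩
      apply Submodule.mem_sup_left
      refine Submodule.mem_sup.mpr ⟨x, Submodule.mem_inf.mpr ⟨hxU, hxQ⟩, -s, neg_mem hs, ?_⟩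
      rw [← hgs]; abel
    have hg2 := h i j hgrep
    obtain ⟨-, hsup⟩ := Submodule.mem_inf.mp hg2
    obtain ⟨up, hup, q, hq, hupq⟩ := Submodule.mem_sup.mp hsup
    obtain ⟨u, hu, p, hp, hupeq⟩ := Submodule.mem_sup.mp hup
    -- u ∈ U ⊓ F1 i, p ∈ Fprev F1 i, q ∈ F1 i ⊓ Fprev F2 j, u + p + q = g
    obtain ⟨huU, huP⟩ := Submodule.mem_inf.mp hu
    obtain ⟨hqP, hqQ⟩ := Submodule.mem_inf.mp hq
    have hueq : u = g - q - p := by rw [← hupq, ← hupeq]; abel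
    have humix : u ∈ F2 j ⊔ Fprev F1 i := by
      refine Submodule.mem_sup.mpr ⟨g - q, sub_mem hgQ (hprev2 j hqQ), -p, neg_mem hp, ?_⟩
      rw [hueq]; abel
    obtain ⟨c, hc, w, hw, hcw⟩ := Submodule.mem_sup.mp (hR j u huU huP humix)
    -- c ∈ U ⊓ F1 i ⊓ F2 j, w ∈ U ⊓ Fprev F1 i, c + w = u
    obtain ⟨hc', hcQ⟩ := Submodule.mem_inf.mp hc
    obtain ⟨hcU, hcP⟩ := Submodule.mem_inf.mp hc'
    obtain ⟨hwU, hwP⟩ := Submodule.mem_inf.mp hw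
    -- y := x - c
    have hyU : x - c ∈ U := sub_mem hxU hcU
    have hyQ : x - c ∈ F2 j := sub_mem hxQ hcQ
    have hyeq : x - c = (w + p) + (q + s) := by
      rw [← hgs, ← hupq, ← hupeq, ← hcw]; abel
    have hymix : x - c ∈ Fprev F1 i ⊔ Fprev F2 j := by
      rw [hyeq]
      exact add_mem (Submodule.mem_sup_left (add_mem hwP hp))
        (Submodule.mem_sup_right (add_mem hqQ hs))
    have hyfinal := hPrev j (x - c) hyU hyQ hymix
    have hx' := add_mem (Submodule.mem_sup_left hc) hyfinal
    rwa [show c + (x - c) = x by abel] at hx'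
  -- the main induction on i
  have key : ∀ i : ℕ,
      (∀ j (x : A), x ∈ U → x ∈ F1 i → x ∈ F2 j ⊔ Fprev F1 i →
        x ∈ (U ⊓ F1 i ⊓ F2 j) ⊔ (U ⊓ Fprev F1 i)) ∧
      (∀ j (x : A), x ∈ U → x ∈ F2 j → x ∈ F1 i ⊔ Fprev F2 j →
        x ∈ (U ⊓ F1 i ⊓ F2 j) ⊔ (U ⊓ Fprev F2 j)) := by
    intro i
    induction i with
    | zero =>
      constructor
      · intro j x hxU hxP hxmix
        have hxQ : x ∈ F2 j := by
          have : (F2 j ⊔ Fprev F1 0 : Submodule K A) = F2 j := by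
            show F2 j ⊔ (⊥ : Submodule K A) = F2 j
            simp
          rwa [this] at hxmix
        exact Submodule.mem_sup_left
          (Submodule.mem_inf.mpr ⟨Submodule.mem_inf.mpr ⟨hxU, hxP⟩, hxQ⟩)
      · -- use rprime_aux with trivial "previous" statement
        refine rprime_aux 0 ?_ ?_
        · intro j x hxU hxP hxmix
          have hxQ : x ∈ F2 j := by
            have : (F2 j ⊔ Fprev F1 0 : Submodule K A) = F2 j := by
              show F2 j ⊔ (⊥ : Submodule K A) = F2 j
              simp
            rwa [this] at hxmix
          exact Submodule.mem_sup_left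
            (Submodule.mem_inf.mpr ⟨Submodule.mem_inf.mpr ⟨hxU, hxP⟩, hxQ⟩)
        · intro j x hxU hxQ hxmix
          have hxq : x ∈ Fprev F2 j := by
            have : (Fprev F1 0 ⊔ Fprev F2 j : Submodule K A) = Fprev F2 j := by
              show (⊥ : Submodule K A) ⊔ Fprev F2 j = Fprev F2 j
              simp
            rwa [this] at hxmix
          exact Submodule.mem_sup_right (Submodule.mem_inf.mpr ⟨hxU, hxq⟩)
    | succ i ih =>
      have hRsucc : ∀ j (x : A), x ∈ U → x ∈ F1 (i + 1) → x ∈ F2 j ⊔ Fprev F1 (i + 1) →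
          x ∈ (U ⊓ F1 (i + 1) ⊓ F2 j) ⊔ (U ⊓ Fprev F1 (i + 1)) := by
        intro j x hxU hxP hxmix
        have hxmix' : x ∈ F2 j ⊔ F1 i := hxmix
        -- descent on the F2-level
        have desc : ∀ k : ℕ, x ∈ (U ⊓ F1 (i + 1) ⊓ F2 (j + k)) ⊔ (U ⊓ F1 i) →
            x ∈ (U ⊓ F1 (i + 1) ⊓ F2 j) ⊔ (U ⊓ F1 i) := by
          intro k
          induction k with
          | zero => intro hmem; exact hmem
          | succ k ihk =>
            intro hmem
            obtain ⟨c, hc, w, hw, hcw⟩ := Submodule.mem_sup.mp hmem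
            obtain ⟨hc', hcQ⟩ := Submodule.mem_inf.mp hc
            obtain ⟨hcU, hcP⟩ := Submodule.mem_inf.mp hc'
            obtain ⟨hwU, hwP⟩ := Submodule.mem_inf.mp hw
            -- c = x - w ∈ F1 i ⊔ F2 (j + k)
            obtain ⟨f, hf, r, hr, hfr⟩ := Submodule.mem_sup.mp hxmix'
            -- f ∈ F2 j, r ∈ F1 i, f + r = x
            have hcmix : c ∈ F1 i ⊔ Fprev F2 (j + (k + 1)) := by
              refine Submodule.mem_sup.mpr ⟨r - w, sub_mem hr hwP, f, hF2mono (Nat.le_add_right j k) hf, ?_⟩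
              have : c = x - w := by rw [← hcw]; abel
              rw [this, ← hfr]; abel
            obtain ⟨c', hc'', v, hv, hc'v⟩ :=
              Submodule.mem_sup.mp (ih.2 (j + (k + 1)) c hcU hcQ hcmix)
            obtain ⟨hc''', hc''Q⟩ := Submodule.mem_inf.mp hc''
            obtain ⟨hc''U, hc''P⟩ := Submodule.mem_inf.mp hc'''
            obtain ⟨hvU, hvQ⟩ := Submodule.mem_inf.mp hv
            -- v = c - c' ∈ F1 (i+1)
            have hvP : v ∈ F1 (i + 1) := by
              have : v = c - c' := by rw [← hc'v]; abel
              rw [this]; exact sub_mem hcP (hF1mono (Nat.le_succ i) hc''P)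
            apply ihk
            refine Submodule.mem_sup.mpr ⟨v, Submodule.mem_inf.mpr
              ⟨Submodule.mem_inf.mpr ⟨hvU, hvP⟩, hvQ⟩, c' + w,
              Submodule.mem_inf.mpr ⟨add_mem hc''U hwU, add_mem hc''P hwP⟩, ?_⟩
            rw [← hcw, ← hc'v]; abel
        obtain ⟨m, hm⟩ := exh2 x
        have hxQm : x ∈ F2 (j + m) := hF2mono (Nat.le_add_left m j) hm
        exact desc m (Submodule.mem_sup_left (Submodule.mem_inf.mpr
          ⟨Submodule.mem_inf.mpr ⟨hxU, hxP⟩, hxQm⟩))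
      refine ⟨hRsucc, rprime_aux (i + 1) hRsucc ?_⟩
      -- previous-column statement from ih.2, enlarging F1 i to F1 (i+1)
      intro j x hxU hxQ hxmix
      have hres := ih.2 j x hxU hxQ hxmix
      obtain ⟨c, hc, v, hv, hcv⟩ := Submodule.mem_sup.mp hres
      obtain ⟨hc', hcQ⟩ := Submodule.mem_inf.mp hc
      obtain ⟨hcU, hcP⟩ := Submodule.mem_inf.mp hc'
      refine Submodule.mem_sup.mpr ⟨c, Submodule.mem_inf.mpr
        ⟨Submodule.mem_inf.mpr ⟨hcU, hF1mono (Nat.le_succ i) hcP⟩, hcQ⟩, v, hv, hcv⟩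
  -- final assembly
  intro i j
  refine le_antisymm (h i j) ?_
  intro x hx
  obtain ⟨hPQ, hsup⟩ := Submodule.mem_inf.mp hx
  obtain ⟨hxP, hxQ⟩ := Submodule.mem_inf.mp hPQ
  obtain ⟨up, hup, q, hq, hupq⟩ := Submodule.mem_sup.mp hsup
  obtain ⟨u, hu, p, hp, hupeq⟩ := Submodule.mem_sup.mp hup
  obtain ⟨huU, huP⟩ := Submodule.mem_inf.mp hu
  obtain ⟨hqP, hqQ⟩ := Submodule.mem_inf.mp hq
  have humix : u ∈ F2 j ⊔ Fprev F1 i := by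
    refine Submodule.mem_sup.mpr ⟨x - q, sub_mem hxQ (hprev2 j hqQ), -p, neg_mem hp, ?_⟩
    rw [← hupq, ← hupeq]; abel
  obtain ⟨c, hc, w, hw, hcw⟩ := Submodule.mem_sup.mp ((key i).1 j u huU huP humix)
  obtain ⟨hc', hcQ⟩ := Submodule.mem_inf.mp hc
  obtain ⟨hcU, hcP⟩ := Submodule.mem_inf.mp hc'
  obtain ⟨hwU, hwP⟩ := Submodule.mem_inf.mp hw
  refine Submodule.mem_inf.mpr ⟨Submodule.mem_inf.mpr ⟨hxQ, hxP⟩, ?_⟩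
  -- x = (c + q) + (w + p)
  have hwpQ : w + p ∈ F2 j := by
    have : w + p = x - c - q := by rw [← hupq, ← hupeq, ← hcw]; abel
    rw [this]; exact sub_mem (sub_mem hxQ hcQ) (hprev2 j hqQ)
  refine Submodule.mem_sup.mpr ⟨c + q, ?_, w + p,
    Submodule.mem_inf.mpr ⟨hwpQ, add_mem hwP hp⟩, ?_⟩
  · exact Submodule.mem_sup.mpr ⟨c, Submodule.mem_inf.mpr ⟨hcU, hcQ⟩, q, hqQ, rfl⟩
  · rw [← hupq, ← hupeq, ← hcw]; abel
end

section
/- Let 𝔤 be a Lie algebra and v ∈ ℂ. The map φ_{1,v}: S(𝔤[[t]]) → S(𝔤[[t]]) determined on generators by x[m] ↦ x[m] + Σ_{k≥1} (-1)^k v^k x[m+k] is an isomorphism of Poisson algebras from (S(𝔤[[t]]), {·,·}₀) to (S(𝔤[[t]]), {·,·}₀ + v{·,·}₁), with inverse determined by x[m] ↦ x[m] + v·x[m+1]. -/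
/-! Write `x[m] = x ⊗ tᵐ`. The bracket `{·,·}₀ + v{·,·}₁` is the Lie–Poisson bracket of `𝔤[t]`
with the deformed bracket `[x f, y g] = [x, y] f g (1 + v t)`, and `ψ_v` is induced by
multiplication by `1 + v t`, which turns the deformed bracket into the standard one. Both sides
of the intertwining identity are biderivations along `ψ_v`, so it suffices to compare them on
pairs of generators. On `𝔤[[t]]` the inverse of `1 + v t` is `Σ (-v t)ᵏ`; its truncations at
`t^N` invert `ψ_v` modulo the variables of `t`-degree `> N`, which gives both injectivity and
density of the image. -/

open MvPolynomial

/-- The image in `S(𝔤[t])` (polynomials in variables `x_a[k]`) of `x ⊗ tᵏ`. -/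
noncomputable def lin {ι L : Type*} [LieRing L] [LieAlgebra ℂ L]
    (b : Module.Basis ι ℂ L) (x : L) (k : ℕ) : MvPolynomial (ι × ℕ) ℂ :=
  (b.repr x).sum fun a c => MvPolynomial.C c * MvPolynomial.X (a, k)

/-- The biderivation bracket on `S(𝔤[t])` with `{x[n],y[m]} = [x,y][n+m+s]`. -/
noncomputable def br {ι L : Type*} [DecidableEq ι] [LieRing L] [LieAlgebra ℂ L]
    (b : Module.Basis ι ℂ L) (s : ℕ) (f g : MvPolynomial (ι × ℕ) ℂ) :
    MvPolynomial (ι × ℕ) ℂ :=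
  ∑ p ∈ f.vars, ∑ q ∈ g.vars,
    pderiv p f * pderiv q g * lin b ⁅b p.1, b q.1⁆ (p.2 + q.2 + s)

namespace MvPolynomial

variable {R σ : Type*} [CommSemiring R]

theorem eq_of_leibniz {A : Type*} [Semiring A] (φ : MvPolynomial σ R → A)
    {D₁ D₂ : MvPolynomial σ R →+ A} (hC₁ : ∀ c, D₁ (C c) = 0) (hC₂ : ∀ c, D₂ (C c) = 0)
    (hmul₁ : ∀ f g, D₁ (f * g) = φ f * D₁ g + φ g * D₁ f)
    (hmul₂ : ∀ f g, D₂ (f * g) = φ f * D₂ g + φ g * D₂ f)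
    (hX : ∀ i, D₁ (X i) = D₂ (X i)) (f : MvPolynomial σ R) : D₁ f = D₂ f := by
  induction f using MvPolynomial.induction_on with
  | C c => rw [hC₁, hC₂]
  | add f g hf hg => rw [map_add, map_add, hf, hg]
  | mul_X f i hf => rw [hmul₁, hmul₂, hf, hX]

theorem sub_mem_of_forall_X_sub_mem {A : Type*} [CommRing A] [Algebra R A]
    {F G : MvPolynomial σ R →ₐ[R] A} {I : Ideal A} (h : ∀ i, F (X i) - G (X i) ∈ I)
    (f : MvPolynomial σ R) : F f - G f ∈ I := by
  have hFG : (Ideal.Quotient.mkₐ R I).comp F = (Ideal.Quotient.mkₐ R I).comp G :=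
    algHom_ext fun i => by simpa [Ideal.Quotient.mkₐ_eq_mk, Ideal.Quotient.eq] using h i
  simpa [Ideal.Quotient.mkₐ_eq_mk, Ideal.Quotient.eq] using DFunLike.congr_fun hFG f

end MvPolynomial

theorem Finset.sum_range_neg_pow_smul_add_smul {R M : Type*} [CommRing R] [AddCommGroup M]
    [Module R M] (v : R) (G : ℕ → M) (n : ℕ) :
    ∑ k ∈ range n, (-v) ^ k • (G k + v • G (k + 1)) = G 0 - (-v) ^ n • G n := by
  have h : ∀ k, (-v) ^ k • (G k + v • G (k + 1)) =
      (-v) ^ k • G k - (-v) ^ (k + 1) • G (k + 1) := by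
    intro k
    rw [smul_add, smul_smul, pow_succ, mul_neg, neg_smul, sub_neg_eq_add]
  simp_rw [h]
  rw [sum_range_sub', pow_zero, one_smul]

section Shift

variable {ι R : Type*} [CommRing R]

noncomputable def psi (v : R) : MvPolynomial (ι × ℕ) R →ₐ[R] MvPolynomial (ι × ℕ) R :=
  aeval fun p => X p + v • X (p.1, p.2 + 1)

noncomputable def phiTrunc (v : R) (N : ℕ) :
    MvPolynomial (ι × ℕ) R →ₐ[R] MvPolynomial (ι × ℕ) R :=
  aeval fun p => ∑ k ∈ Finset.range (N + 1), (-v) ^ k • X (p.1, p.2 + k)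

noncomputable def truncIdeal (N : ℕ) : Ideal (MvPolynomial (ι × ℕ) R) :=
  Ideal.span {q | ∃ p : ι × ℕ, N < p.2 ∧ q = X p}

theorem psi_X (v : R) (p : ι × ℕ) : psi v (X p) = X p + v • X (p.1, p.2 + 1) :=
  aeval_X _ p

theorem phiTrunc_X (v : R) (N : ℕ) (p : ι × ℕ) :
    phiTrunc v N (X p) = ∑ k ∈ Finset.range (N + 1), (-v) ^ k • X (p.1, p.2 + k) :=
  aeval_X _ p

theorem psi_phiTrunc_X (v : R) (N : ℕ) (p : ι × ℕ) :
    psi v (phiTrunc v N (X p)) = X p - (-v) ^ (N + 1) • X (p.1, p.2 + (N + 1)) := by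
  simp only [phiTrunc_X, map_sum, map_smul, psi_X, add_assoc]
  exact Finset.sum_range_neg_pow_smul_add_smul v (fun k => X (p.1, p.2 + k)) (N + 1)

theorem phiTrunc_psi_X (v : R) (N : ℕ) (p : ι × ℕ) :
    phiTrunc v N (psi v (X p)) = X p - (-v) ^ (N + 1) • X (p.1, p.2 + (N + 1)) := by
  have h := Finset.sum_range_neg_pow_smul_add_smul v
    (fun k => (X (p.1, p.2 + k) : MvPolynomial (ι × ℕ) R)) (N + 1)
  rw [add_zero] at h
  rw [← h]
  simp only [psi_X, map_add, map_smul, phiTrunc_X, Finset.smul_sum, smul_add,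
    Finset.sum_add_distrib, smul_comm v, add_assoc, add_comm 1]

theorem sub_mem_truncIdeal_of_forall_X (N : ℕ) (c : R)
    {F : MvPolynomial (ι × ℕ) R →ₐ[R] MvPolynomial (ι × ℕ) R}
    (hF : ∀ p, F (X p) = X p - c • X (p.1, p.2 + (N + 1))) (f : MvPolynomial (ι × ℕ) R) :
    f - F f ∈ truncIdeal N := by
  refine sub_mem_of_forall_X_sub_mem (F := AlgHom.id R _) (fun p => ?_) f
  rw [AlgHom.id_apply, hF, sub_sub_cancel]
  exact Submodule.smul_of_tower_mem _ c (Ideal.subset_span ⟨_, by omega, rfl⟩)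

theorem sub_psi_phiTrunc_mem (v : R) (N : ℕ) (f : MvPolynomial (ι × ℕ) R) :
    f - psi v (phiTrunc v N f) ∈ truncIdeal N :=
  sub_mem_truncIdeal_of_forall_X N ((-v) ^ (N + 1)) (F := (psi v).comp (phiTrunc v N))
    (fun p => by rw [AlgHom.comp_apply, psi_phiTrunc_X]) f

theorem sub_phiTrunc_psi_mem (v : R) (N : ℕ) (f : MvPolynomial (ι × ℕ) R) :
    f - phiTrunc v N (psi v f) ∈ truncIdeal N :=
  sub_mem_truncIdeal_of_forall_X N ((-v) ^ (N + 1)) (F := (phiTrunc v N).comp (psi v))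
    (fun p => by rw [AlgHom.comp_apply, phiTrunc_psi_X]) f

theorem eq_zero_of_mem_truncIdeal {N : ℕ} {f : MvPolynomial (ι × ℕ) R} (hf : f ∈ truncIdeal N)
    (hvars : ∀ p ∈ f.vars, p.2 ≤ N) : f = 0 := by
  have himage : {q : MvPolynomial (ι × ℕ) R | ∃ p : ι × ℕ, N < p.2 ∧ q = X p} =
      X '' {p : ι × ℕ | N < p.2} := by
    ext q
    simp [eq_comm]
  rw [truncIdeal, himage, mem_ideal_span_X_image] at hf
  by_contra hne
  obtain ⟨m, hm⟩ := support_nonempty.mpr hne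
  obtain ⟨p, hNp, hmp⟩ := hf m hm
  have hp : p ∈ f.vars :=
    (mem_vars_iff_mem_support p).mpr ⟨m, hm, Finsupp.mem_support_iff.mpr hmp⟩
  exact absurd (hvars p hp) (not_le.mpr hNp)

theorem psi_injective (v : R) : Function.Injective (psi (ι := ι) v) := by
  refine (injective_iff_map_eq_zero _).mpr fun f hf => ?_
  set N := f.vars.sup Prod.snd
  refine eq_zero_of_mem_truncIdeal (N := N) ?_ fun p hp => Finset.le_sup (f := Prod.snd) hp
  simpa [hf] using sub_phiTrunc_psi_mem v N f

end Shift

section Bracket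

variable {ι L : Type*} [LieRing L] [LieAlgebra ℂ L] (b : Module.Basis ι ℂ L)

theorem lin_neg (x : L) (k : ℕ) : lin b (-x) k = -lin b x k := by
  simp [lin, Finsupp.sum_neg_index]

theorem psi_lin (v : ℂ) (x : L) (k : ℕ) :
    psi v (lin b x k) = lin b x k + v • lin b x (k + 1) := by
  unfold lin
  rw [map_finsuppSum, Finsupp.smul_sum, ← Finsupp.sum_add]
  refine Finsupp.sum_congr fun a _ => ?_
  rw [map_mul, psi_X, psi, aeval_C, algebraMap_eq, mul_add, mul_smul_comm]

variable [DecidableEq ι]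

theorem br_eq_sum_of_subset (s : ℕ) {f g : MvPolynomial (ι × ℕ) ℂ} {S T : Finset (ι × ℕ)}
    (hS : f.vars ⊆ S) (hT : g.vars ⊆ T) :
    br b s f g = ∑ p ∈ S, ∑ q ∈ T,
      pderiv p f * pderiv q g * lin b ⁅b p.1, b q.1⁆ (p.2 + q.2 + s) := by
  unfold br
  rw [Finset.sum_subset hS fun p _ hp => Finset.sum_eq_zero fun q _ => by
    rw [pderiv_eq_zero_of_notMem_vars hp, zero_mul, zero_mul]]
  refine Finset.sum_congr rfl fun p _ => Finset.sum_subset hT fun q _ hq => ?_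
  rw [pderiv_eq_zero_of_notMem_vars hq, mul_zero, zero_mul]

theorem br_swap (s : ℕ) (f g : MvPolynomial (ι × ℕ) ℂ) : br b s g f = -br b s f g := by
  unfold br
  rw [Finset.sum_comm, ← Finset.sum_neg_distrib]
  refine Finset.sum_congr rfl fun p _ => ?_
  rw [← Finset.sum_neg_distrib]
  refine Finset.sum_congr rfl fun q _ => ?_
  rw [← lie_skew, lin_neg, add_comm q.2]
  ring

theorem br_add_left (s : ℕ) (f f' g : MvPolynomial (ι × ℕ) ℂ) :
    br b s (f + f') g = br b s f g + br b s f' g := by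
  rw [br_eq_sum_of_subset b s (vars_add_subset f f') subset_rfl,
    br_eq_sum_of_subset b s Finset.subset_union_left subset_rfl,
    br_eq_sum_of_subset b s Finset.subset_union_right subset_rfl, ← Finset.sum_add_distrib]
  refine Finset.sum_congr rfl fun p _ => ?_
  rw [← Finset.sum_add_distrib]
  refine Finset.sum_congr rfl fun q _ => ?_
  rw [map_add]
  ring

theorem br_add_right (s : ℕ) (f g g' : MvPolynomial (ι × ℕ) ℂ) :
    br b s f (g + g') = br b s f g + br b s f g' := by
  rw [br_swap b s (g + g'), br_add_left, br_swap b s f g, br_swap b s f g', neg_add, neg_neg,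
    neg_neg]

theorem br_C_left (s : ℕ) (c : ℂ) (g : MvPolynomial (ι × ℕ) ℂ) : br b s (C c) g = 0 := by
  simp [br, vars_C]

theorem br_mul_left (s : ℕ) (f f' g : MvPolynomial (ι × ℕ) ℂ) :
    br b s (f * f') g = f * br b s f' g + f' * br b s f g := by
  have hf : f.vars ⊆ f.vars ∪ f'.vars := Finset.subset_union_left
  have hf' : f'.vars ⊆ f.vars ∪ f'.vars := Finset.subset_union_right
  rw [br_eq_sum_of_subset b s (vars_mul f f') subset_rfl, br_eq_sum_of_subset b s hf subset_rfl,
    br_eq_sum_of_subset b s hf' subset_rfl, Finset.mul_sum, Finset.mul_sum,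
    ← Finset.sum_add_distrib]
  refine Finset.sum_congr rfl fun p _ => ?_
  rw [Finset.mul_sum, Finset.mul_sum, ← Finset.sum_add_distrib]
  refine Finset.sum_congr rfl fun q _ => ?_
  rw [pderiv_mul]
  ring

theorem br_smul_left (s : ℕ) (c : ℂ) (f g : MvPolynomial (ι × ℕ) ℂ) :
    br b s (c • f) g = c • br b s f g := by
  rw [smul_eq_C_mul, br_mul_left, br_C_left, mul_zero, add_zero, smul_eq_C_mul]

theorem br_smul_right (s : ℕ) (c : ℂ) (f g : MvPolynomial (ι × ℕ) ℂ) :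
    br b s f (c • g) = c • br b s f g := by
  rw [br_swap b s (c • g), br_smul_left, br_swap b s f g, smul_neg, neg_neg]

theorem br_X_X (s : ℕ) (p q : ι × ℕ) :
    br b s (X p) (X q) = lin b ⁅b p.1, b q.1⁆ (p.2 + q.2 + s) := by
  simp [br, vars_X]

end Bracket

section Intertwining

variable {ι L : Type*} [DecidableEq ι] [LieRing L] [LieAlgebra ℂ L] (b : Module.Basis ι ℂ L)
  (v : ℂ)

theorem psi_br_X_X (p q : ι × ℕ) :
    psi v (br b 0 (X p) (X q) + v • br b 1 (X p) (X q)) =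
      br b 0 (psi v (X p)) (psi v (X q)) := by
  rw [psi_X, psi_X, br_add_left, br_add_right, br_add_right, br_smul_left, br_smul_right,
    br_smul_right, br_smul_left]
  simp only [br_X_X, map_add, map_smul, psi_lin, smul_add, smul_smul]
  ring_nf

theorem psi_br_of_forall_X (g : MvPolynomial (ι × ℕ) ℂ)
    (h : ∀ p, psi v (br b 0 (X p) g + v • br b 1 (X p) g) = br b 0 (psi v (X p)) (psi v g))
    (f : MvPolynomial (ι × ℕ) ℂ) :
    psi v (br b 0 f g + v • br b 1 f g) = br b 0 (psi v f) (psi v g) := by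
  let D₁ : MvPolynomial (ι × ℕ) ℂ →+ MvPolynomial (ι × ℕ) ℂ :=
    AddMonoidHom.mk' (fun f => psi v (br b 0 f g + v • br b 1 f g)) fun f f' => by
      simp only [br_add_left, smul_add, map_add]
      abel
  let D₂ : MvPolynomial (ι × ℕ) ℂ →+ MvPolynomial (ι × ℕ) ℂ :=
    AddMonoidHom.mk' (fun f => br b 0 (psi v f) (psi v g)) fun f f' => by
      rw [map_add, br_add_left]
  refine eq_of_leibniz (psi v) (D₁ := D₁) (D₂ := D₂) (fun c => ?_) (fun c => ?_)
    (fun f f' => ?_) (fun f f' => ?_) h f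
  · simp [D₁, br_C_left]
  · simp [D₂, psi, br_C_left]
  · simp only [D₁, AddMonoidHom.mk'_apply, br_mul_left, smul_add, map_add, map_mul, map_smul,
      mul_add, mul_smul_comm]
    abel
  · simp only [D₂, AddMonoidHom.mk'_apply, map_mul, br_mul_left]

theorem psi_br_symm {f g : MvPolynomial (ι × ℕ) ℂ}
    (h : psi v (br b 0 f g + v • br b 1 f g) = br b 0 (psi v f) (psi v g)) :
    psi v (br b 0 g f + v • br b 1 g f) = br b 0 (psi v g) (psi v f) := by
  rw [br_swap b 0 f g, br_swap b 1 f g, br_swap b 0 (psi v f), smul_neg, ← neg_add, map_neg, h]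

theorem psi_br (f g : MvPolynomial (ι × ℕ) ℂ) :
    psi v (br b 0 f g + v • br b 1 f g) = br b 0 (psi v f) (psi v g) :=
  psi_br_of_forall_X b v g (fun p => psi_br_symm b v <|
    psi_br_of_forall_X b v (X p) (fun q => psi_br_X_X b v q p) g) f

end Intertwining

/-- `S(𝔤[[t]])` is the completion of `S(𝔤[t])` at the ideals `truncIdeal N`, so the last two
conjuncts say that `ψ_v` extends to a bijection of the completion; its inverse is the limit of
`phiTrunc v N`, i.e. `φ_{1,v}`. -/
theorem statement5 {ι L : Type*} [DecidableEq ι] [LieRing L] [LieAlgebra ℂ L]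
    (b : Module.Basis ι ℂ L) (v : ℂ) :
    let ψ : MvPolynomial (ι × ℕ) ℂ →ₐ[ℂ] MvPolynomial (ι × ℕ) ℂ :=
      aeval fun p : ι × ℕ =>
        (X p : MvPolynomial (ι × ℕ) ℂ) + v • X (p.1, p.2 + 1)
    (∀ f g, ψ (br b 0 f g + v • br b 1 f g) = br b 0 (ψ f) (ψ g)) ∧
    Function.Injective ψ ∧
    (∀ (f : MvPolynomial (ι × ℕ) ℂ) (N : ℕ), ∃ g,
      f - ψ g ∈ Ideal.span
        {q : MvPolynomial (ι × ℕ) ℂ | ∃ p : ι × ℕ, N < p.2 ∧ q = X p}) :=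
  ⟨psi_br b v, psi_injective v, fun f N => ⟨phiTrunc v N f, sub_psi_phiTrunc_mem v N f⟩⟩
end

section
/- Let 𝔤 be a Lie algebra with invariant symmetric bilinear form, and define the universal Gaudin subalgebra A_𝔤 ⊆ S(𝔤[t]) as the subalgebra generated by D^k Φ_i for k ≥ 0 and Φ₁,...,Φ_r free generators of S(𝔤)^𝔤, where D(x[n]) = (n+1)x[n+1]. Then A_𝔤 is Poisson commutative with respect to both brackets {x[n],y[m]}₀ = [x,y][n+m] and {x[n],y[m]}₁ = [x,y][n+m+1]. -/
open MvPolynomial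

/-- The adjoint action of `x ∈ 𝔤` on `S(𝔤[t])` by derivations,
`x · y[n] = [x,y][n]`. -/
noncomputable def lact {ι L : Type*} [DecidableEq ι] [LieRing L] [LieAlgebra ℂ L]
    (b : Module.Basis ι ℂ L) (x : L) (f : MvPolynomial (ι × ℕ) ℂ) :
    MvPolynomial (ι × ℕ) ℂ :=
  ∑ p ∈ f.vars, pderiv p f * lin b ⁅x, b p.1⁆ p.2

/-- The derivation `D` of `S(𝔤[t])` with `D(x[n]) = (n+1)·x[n+1]`. -/
noncomputable def Dop {ι : Type*} [DecidableEq ι]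
    (f : MvPolynomial (ι × ℕ) ℂ) : MvPolynomial (ι × ℕ) ℂ :=
  ∑ p ∈ f.vars, ((p.2 + 1 : ℕ) : ℂ) • (pderiv p f * MvPolynomial.X (p.1, p.2 + 1))

/-!
For `f ∈ S(𝔤)` substitute the current `x_a(z) = ∑ₙ x_a[n] zⁿ` for each `x_a[0]`. Then
`Dᵏ f = k! · [zᵏ] f(x(z))`, so `A_𝔤` is generated by the coefficients of the `Φᵢ(x(z))`.
Since the brackets are biderivations,
`{[zᵏ] f(x(z)), [zˡ] g(x(z))}ₛ = ∑_{i ≤ k, j ≤ l} T i j` with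
`T i j = ∑_{a,c} [zⁱ] ∂ₐf(x(z)) · [zʲ] ∂_c g(x(z)) · [x_a, x_c][k + l + s - i - j]`.
Invariance of `g`, read off along the current, says that every full row `∑_{j ≤ N - i} T i j`
of the triangle `i + j ≤ N = k + l + s` vanishes, and invariance of `f` that every full column
does. For `s ≤ 1` the part of the triangle outside the rectangle `[0, k] × [0, l]` is a union of
full columns, so the rectangle sum vanishes too.
-/

open Finset

theorem Derivation.apply_coeff_mul {R A : Type*} [CommSemiring R] [CommRing A] [Algebra R A]
    (δ : Derivation R A A) {F G dF dG : PowerSeries A}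
    (hF : ∀ k, δ (PowerSeries.coeff k F) = PowerSeries.coeff k dF)
    (hG : ∀ k, δ (PowerSeries.coeff k G) = PowerSeries.coeff k dG) (k : ℕ) :
    δ (PowerSeries.coeff k (F * G)) = PowerSeries.coeff k (dF * G + F * dG) := by
  simp only [PowerSeries.coeff_mul, map_add, map_sum, Derivation.leibniz, hF, hG, smul_eq_mul,
    ← sum_add_distrib]
  exact sum_congr rfl fun _ _ => by ring

namespace MvPolynomial

variable {R σ : Type*} [CommRing R]

theorem derivation_eq_sum_pderiv [DecidableEq σ]
    (D : Derivation R (MvPolynomial σ R) (MvPolynomial σ R))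
    (f : MvPolynomial σ R) : D f = ∑ i ∈ f.vars, pderiv i f * D (X i) := by
  have hsum (g : MvPolynomial σ R) :
      (∑ i ∈ f.vars, D (X i) • pderiv i) g = ∑ i ∈ f.vars, pderiv i g * D (X i) := by
    rw [← Derivation.coeFnAddMonoidHom_apply (∑ i ∈ f.vars, _), map_sum, Finset.sum_apply]
    simp [mul_comm]
  rw [derivation_eq_of_forall_mem_vars (D₂ := ∑ i ∈ f.vars, D (X i) • pderiv i)
    fun j hj => by simp [hsum, pderiv_X, Pi.single_apply, hj], hsum]

theorem sum_vars_eq_sum_of_pderiv_eq_zero [DecidableEq σ] {M : Type*} [AddCommMonoid M]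
    {f : MvPolynomial σ R} {U : Finset σ} {F : σ → M} (hU : ∀ i ∉ U, pderiv i f = 0)
    (hF : ∀ i, pderiv i f = 0 → F i = 0) : ∑ i ∈ f.vars, F i = ∑ i ∈ U, F i := by
  rw [sum_subset subset_union_left fun i _ hi => hF i (pderiv_eq_zero_of_notMem_vars hi),
    ← sum_subset (subset_union_right (s₁ := f.vars)) fun i _ hi => hF i (hU i hi)]

end MvPolynomial

theorem Finset.sum_range_sum_range_eq_zero_of_triangle {M : Type*} [AddCommGroup M] {k l N : ℕ}
    (T : ℕ → ℕ → M) (hrow : ∀ i ≤ k, ∑ j ∈ range (N - i + 1), T i j = 0)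
    (hcol : ∀ j, l < j → ∑ i ∈ range (N - j + 1), T i j = 0)
    (hN : k + l ≤ N) (hN' : N ≤ k + l + 1) :
    ∑ i ∈ range (k + 1), ∑ j ∈ range (l + 1), T i j = 0 := by
  have hsplit : ∀ i ∈ range (k + 1), ∑ j ∈ range (l + 1), T i j =
      -∑ j ∈ Ico (l + 1) (N - i + 1), T i j := fun i hi => by
    rw [mem_range] at hi
    rw [eq_neg_iff_add_eq_zero, sum_range_add_sum_Ico _ (by omega), hrow i (by omega)]
  rw [sum_congr rfl hsplit, sum_neg_distrib, neg_eq_zero,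
    sum_comm' (t' := Ico (l + 1) (N + 1)) (s' := fun j => range (N - j + 1))]
  · exact sum_eq_zero fun j hj => hcol j (by rw [mem_Ico] at hj; omega)
  · intro i j
    simp only [mem_range, mem_Ico]
    omega

section Gaudin

variable {ι : Type*}

/-- Substitutes the current `∑ₙ x_a[n] zⁿ` for `x_a[m]`; only its values on `S(𝔤)`, the
polynomials in the `x_a[0]`, matter. -/
noncomputable def evalCurrent :
    MvPolynomial (ι × ℕ) ℂ →ₐ[ℂ] PowerSeries (MvPolynomial (ι × ℕ) ℂ) :=
  aeval fun p => PowerSeries.mk fun n => X (p.1, n)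

@[simp]
theorem coeff_evalCurrent_X (p : ι × ℕ) (n : ℕ) :
    PowerSeries.coeff n (evalCurrent (X p : MvPolynomial (ι × ℕ) ℂ)) = X (p.1, n) := by
  simp [evalCurrent]

theorem constantCoeff_evalCurrent {f : MvPolynomial (ι × ℕ) ℂ}
    (hf : f ∈ supported ℂ {p : ι × ℕ | p.2 = 0}) :
    PowerSeries.constantCoeff (evalCurrent f) = f := by
  rw [supported_eq_adjoin_X] at hf
  induction hf using Algebra.adjoin_induction with
  | mem x hx =>
    obtain ⟨⟨c, m⟩, hm, rfl⟩ := hx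
    obtain rfl : m = 0 := hm
    simp [← PowerSeries.coeff_zero_eq_constantCoeff_apply]
  | algebraMap c => simp [PowerSeries.algebraMap_apply]
  | add f g _ _ hf hg => rw [map_add, map_add, hf, hg]
  | mul f g _ _ hf hg => rw [map_mul, map_mul, hf, hg]

variable {L : Type*} [LieRing L] [LieAlgebra ℂ L] (b : Module.Basis ι ℂ L)

theorem lin_lie_skew (x y : L) (k : ℕ) : lin b ⁅x, y⁆ k = -lin b ⁅y, x⁆ k := by
  rw [← lie_skew x y, lin, lin, map_neg, Finsupp.sum_neg_index (fun _ => by simp)]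
  simp only [map_neg, neg_mul, Finsupp.sum_neg]

theorem coeff_evalCurrent_lin (x : L) (n : ℕ) :
    PowerSeries.coeff n (evalCurrent (lin b x 0)) = lin b x n := by
  simp [lin, Finsupp.sum, evalCurrent, PowerSeries.algebraMap_apply]

variable [DecidableEq ι]

theorem Dop_eq_mkDerivation :
    (Dop : MvPolynomial (ι × ℕ) ℂ → MvPolynomial (ι × ℕ) ℂ) =
      mkDerivation ℂ fun p => ((p.2 + 1 : ℕ) : ℂ) • X (p.1, p.2 + 1) := by
  funext f
  rw [derivation_eq_sum_pderiv, Dop]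
  simp [mkDerivation_X]

theorem Dop_coeff_evalCurrent (f : MvPolynomial (ι × ℕ) ℂ) (k : ℕ) :
    Dop (PowerSeries.coeff k (evalCurrent f)) =
      PowerSeries.coeff k (PowerSeries.derivative _ (evalCurrent f)) := by
  rw [Dop_eq_mkDerivation]
  induction f using MvPolynomial.induction_on generalizing k with
  | C c =>
    simp [evalCurrent, PowerSeries.algebraMap_apply, PowerSeries.coeff_C, apply_ite]
  | add f g hf hg => simp only [map_add, hf, hg]
  | mul_X f p hf =>
    have hX (n : ℕ) : (mkDerivation ℂ fun p : ι × ℕ => ((p.2 + 1 : ℕ) : ℂ) • X (p.1, p.2 + 1))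
        (PowerSeries.coeff n (evalCurrent (X p))) =
        PowerSeries.coeff n (PowerSeries.derivative _ (evalCurrent (X p))) := by
      simp [PowerSeries.coeff_derivative, mkDerivation_X, evalCurrent, smul_eq_C_mul, mul_comm]
    rw [map_mul, Derivation.apply_coeff_mul _ hf hX, Derivation.leibniz, smul_eq_mul, smul_eq_mul]
    exact congrArg (PowerSeries.coeff k) (by ring)

theorem Dop_iterate_eq_factorial_smul {f : MvPolynomial (ι × ℕ) ℂ}
    (hf : f ∈ supported ℂ {p : ι × ℕ | p.2 = 0}) (k : ℕ) :
    Dop^[k] f = (k.factorial : ℂ) • PowerSeries.coeff k (evalCurrent f) := by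
  induction k with
  | zero => simp [constantCoeff_evalCurrent hf]
  | succ k ih =>
    have hDop : Dop (PowerSeries.coeff k (evalCurrent f)) =
        ((k + 1 : ℕ) : ℂ) • PowerSeries.coeff (k + 1) (evalCurrent f) := by
      rw [Dop_coeff_evalCurrent, PowerSeries.coeff_derivative, smul_eq_C_mul, mul_comm]
      simp
    rw [Function.iterate_succ_apply', ih, Dop_eq_mkDerivation, Derivation.map_smul,
      ← Dop_eq_mkDerivation, hDop, smul_smul, Nat.factorial_succ, Nat.cast_mul, mul_comm]

theorem pderiv_coeff_evalCurrent {f : MvPolynomial (ι × ℕ) ℂ}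
    (hf : f ∈ supported ℂ {p : ι × ℕ | p.2 = 0}) (a : ι) (n k : ℕ) :
    pderiv (a, n) (PowerSeries.coeff k (evalCurrent f)) =
      PowerSeries.coeff k (PowerSeries.X ^ n * evalCurrent (pderiv (a, 0) f)) := by
  rw [supported_eq_adjoin_X] at hf
  induction hf using Algebra.adjoin_induction generalizing k with
  | algebraMap c =>
    simp [evalCurrent, PowerSeries.algebraMap_apply, PowerSeries.coeff_C, apply_ite]
  | mem x hx =>
    obtain ⟨⟨c, m⟩, hm, rfl⟩ := hx
    obtain rfl : m = 0 := hm
    by_cases hc : c = a <;> simp [pderiv_X, Pi.single_apply, PowerSeries.coeff_X_pow, hc]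
  | add f g _ _ hf hg => simp only [map_add, hf, hg, mul_add]
  | mul f g _ _ hf hg =>
    rw [map_mul, Derivation.apply_coeff_mul _ hf hg, Derivation.leibniz, smul_eq_mul,
      smul_eq_mul]
    congr 1
    simp only [map_add, map_mul]
    ring

theorem br_eq_mkDerivation (s : ℕ) (f g : MvPolynomial (ι × ℕ) ℂ) :
    br b s f g = mkDerivation ℂ (fun p => ∑ q ∈ g.vars,
      pderiv q g * lin b ⁅b p.1, b q.1⁆ (p.2 + q.2 + s)) f := by
  rw [derivation_eq_sum_pderiv _ f, br]
  refine sum_congr rfl fun p _ => ?_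
  simp only [mkDerivation_X, mul_sum, mul_assoc]

theorem br_antisymm (s : ℕ) (f g : MvPolynomial (ι × ℕ) ℂ) : br b s f g = -br b s g f := by
  rw [br, br, sum_comm, ← sum_neg_distrib]
  refine sum_congr rfl fun p _ => ?_
  rw [← sum_neg_distrib]
  refine sum_congr rfl fun q _ => ?_
  rw [lin_lie_skew b (b p.1), add_comm p.2 q.2]
  ring

theorem br_eq_zero_of_mem_adjoin (s : ℕ) {S : Set (MvPolynomial (ι × ℕ) ℂ)}
    (hS : ∀ f ∈ S, ∀ g ∈ S, br b s f g = 0) :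
    ∀ f ∈ Algebra.adjoin ℂ S, ∀ g ∈ Algebra.adjoin ℂ S, br b s f g = 0 := by
  have hleft (g) (hg : ∀ f ∈ S, br b s f g = 0) (f) (hf : f ∈ Algebra.adjoin ℂ S) :
      br b s f g = 0 := by
    have hD := Derivation.eqOn_adjoin (R := ℂ) (A := MvPolynomial (ι × ℕ) ℂ) (s := S)
      (D1 := mkDerivation ℂ (fun p => ∑ q ∈ g.vars,
        pderiv q g * lin b ⁅b p.1, b q.1⁆ (p.2 + q.2 + s))) (D2 := 0)
      (fun f hf => by rw [Derivation.zero_apply, ← br_eq_mkDerivation]; exact hg f hf) hf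
    rw [br_eq_mkDerivation, hD, Derivation.zero_apply]
  intro f hf g hg
  refine hleft g (fun f' hf' => ?_) f hf
  rw [br_antisymm, hleft f' (fun x hx => hS x hx f' hf') g hg, neg_zero]

theorem sum_coeff_evalCurrent_pderiv_mul_lin_eq_zero [Fintype ι] {f : MvPolynomial (ι × ℕ) ℂ}
    (hf : f ∈ supported ℂ {p : ι × ℕ | p.2 = 0}) {x : L} (hx : lact b x f = 0) (t : ℕ) :
    ∑ j ∈ range (t + 1), ∑ c : ι, PowerSeries.coeff j (evalCurrent (pderiv (c, 0) f)) *
      lin b ⁅x, b c⁆ (t - j) = 0 := by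
  have hlact : lact b x f = ∑ c : ι, pderiv (c, 0) f * lin b ⁅x, b c⁆ 0 := by
    rw [lact, sum_vars_eq_sum_of_pderiv_eq_zero (U := univ ×ˢ {0}), sum_product]
    · simp
    · intro p hp
      refine pderiv_eq_zero_of_notMem_vars fun hpf => hp ?_
      exact mem_product.2 ⟨mem_univ _, mem_singleton.2 (mem_supported.1 hf hpf)⟩
    · intro p hp
      rw [hp, zero_mul]
  have hcoeff := congrArg (fun f => PowerSeries.coeff t (evalCurrent f)) hx
  simp only [hlact, map_sum, map_mul, PowerSeries.coeff_mul, map_zero] at hcoeff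
  rw [sum_comm, ← hcoeff]
  refine sum_congr rfl fun c _ => ?_
  rw [Nat.sum_antidiagonal_eq_sum_range_succ_mk]
  simp [coeff_evalCurrent_lin]

theorem sum_vars_pderiv_coeff_evalCurrent_mul [Fintype ι] {h : MvPolynomial (ι × ℕ) ℂ}
    (hh : h ∈ supported ℂ {p : ι × ℕ | p.2 = 0}) (k : ℕ) (F : ι × ℕ → MvPolynomial (ι × ℕ) ℂ) :
    ∑ p ∈ (PowerSeries.coeff k (evalCurrent h)).vars,
        pderiv p (PowerSeries.coeff k (evalCurrent h)) * F p =
      ∑ i ∈ range (k + 1), ∑ a : ι,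
        PowerSeries.coeff i (evalCurrent (pderiv (a, 0) h)) * F (a, k - i) := by
  have hpderiv (p : ι × ℕ) : pderiv p (PowerSeries.coeff k (evalCurrent h)) =
      if p.2 ≤ k then PowerSeries.coeff (k - p.2) (evalCurrent (pderiv (p.1, 0) h)) else 0 := by
    rw [pderiv_coeff_evalCurrent hh, PowerSeries.coeff_X_pow_mul']
  rw [sum_vars_eq_sum_of_pderiv_eq_zero (U := univ ×ˢ range (k + 1)), sum_product_right,
    ← sum_range_reflect]
  · refine sum_congr rfl fun i hi => sum_congr rfl fun a _ => ?_
    have hik : i ≤ k := Nat.lt_succ_iff.1 (mem_range.1 hi)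
    rw [hpderiv, if_pos (by omega), Nat.add_sub_cancel, Nat.sub_sub_self hik]
  · intro p hp
    rw [hpderiv, if_neg]
    simpa [Nat.lt_succ_iff] using hp
  · intro p hp
    rw [hp, zero_mul]

theorem br_coeff_evalCurrent [Fintype ι] {f g : MvPolynomial (ι × ℕ) ℂ}
    (hf : f ∈ supported ℂ {p : ι × ℕ | p.2 = 0}) (hg : g ∈ supported ℂ {p : ι × ℕ | p.2 = 0})
    (s k l : ℕ) :
    br b s (PowerSeries.coeff k (evalCurrent f)) (PowerSeries.coeff l (evalCurrent g)) =
      ∑ i ∈ range (k + 1), ∑ j ∈ range (l + 1), ∑ a : ι, ∑ c : ι,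
        PowerSeries.coeff i (evalCurrent (pderiv (a, 0) f)) *
          PowerSeries.coeff j (evalCurrent (pderiv (c, 0) g)) *
          lin b ⁅b a, b c⁆ (k + l + s - i - j) := by
  simp only [br, mul_assoc, ← mul_sum]
  rw [sum_vars_pderiv_coeff_evalCurrent_mul hf]
  simp only [sum_vars_pderiv_coeff_evalCurrent_mul hg, mul_sum]
  refine sum_congr rfl fun i hi => ?_
  rw [sum_comm]
  refine sum_congr rfl fun j hj => sum_congr rfl fun a _ => sum_congr rfl fun c _ => ?_
  rw [mem_range] at hi hj
  rw [show k - i + (l - j) + s = k + l + s - i - j by omega]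

theorem br_coeff_evalCurrent_eq_zero [Fintype ι] {f g : MvPolynomial (ι × ℕ) ℂ}
    (hf : f ∈ supported ℂ {p : ι × ℕ | p.2 = 0}) (hg : g ∈ supported ℂ {p : ι × ℕ | p.2 = 0})
    (hf_inv : ∀ x : L, lact b x f = 0) (hg_inv : ∀ x : L, lact b x g = 0) {s : ℕ} (hs : s ≤ 1)
    (k l : ℕ) :
    br b s (PowerSeries.coeff k (evalCurrent f)) (PowerSeries.coeff l (evalCurrent g)) = 0 := by
  rw [br_coeff_evalCurrent b hf hg]
  refine sum_range_sum_range_eq_zero_of_triangle (N := k + l + s) _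
    (fun i _ => ?_) (fun j _ => ?_) (by omega) (by omega)
  · rw [sum_comm]
    refine sum_eq_zero fun a _ => ?_
    simp only [mul_assoc, ← mul_sum]
    rw [sum_coeff_evalCurrent_pderiv_mul_lin_eq_zero b hg (hg_inv (b a)), mul_zero]
  · have hskew (i : ℕ) (a c : ι) :
        PowerSeries.coeff i (evalCurrent (pderiv (a, 0) f)) *
          PowerSeries.coeff j (evalCurrent (pderiv (c, 0) g)) *
          lin b ⁅b a, b c⁆ (k + l + s - i - j) =
        -(PowerSeries.coeff j (evalCurrent (pderiv (c, 0) g)) *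
          (PowerSeries.coeff i (evalCurrent (pderiv (a, 0) f)) *
            lin b ⁅b c, b a⁆ (k + l + s - j - i))) := by
      rw [lin_lie_skew b (b a), Nat.sub_right_comm]
      ring
    simp only [hskew, sum_neg_distrib, neg_eq_zero]
    rw [sum_congr rfl fun i _ => sum_comm, sum_comm]
    refine sum_eq_zero fun c _ => ?_
    simp only [← mul_sum]
    rw [sum_coeff_evalCurrent_pderiv_mul_lin_eq_zero b hf (hf_inv (b c)), mul_zero]

end Gaudin

theorem statement7_general {ι L : Type*} [Fintype ι] [DecidableEq ι]
    [LieRing L] [LieAlgebra ℂ L] (b : Module.Basis ι ℂ L)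
    (r : ℕ) (Φ : Fin r → MvPolynomial (ι × ℕ) ℂ)
    (hdeg : ∀ i, ∀ p ∈ (Φ i).vars, p.2 = 0)
    (hinv : ∀ i (x : L), lact b x (Φ i) = 0) :
    ∀ f ∈ Algebra.adjoin ℂ
        {g : MvPolynomial (ι × ℕ) ℂ | ∃ (k : ℕ) (i : Fin r), g = Dop^[k] (Φ i)},
      ∀ g ∈ Algebra.adjoin ℂ
        {g : MvPolynomial (ι × ℕ) ℂ | ∃ (k : ℕ) (i : Fin r), g = Dop^[k] (Φ i)},
        br b 0 f g = 0 ∧ br b 1 f g = 0 := by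
  have hΦ (i : Fin r) : Φ i ∈ supported ℂ {p : ι × ℕ | p.2 = 0} :=
    mem_supported.2 fun p hp => hdeg i p hp
  let S := {F | ∃ (k : ℕ) (i : Fin r), F = PowerSeries.coeff k (evalCurrent (Φ i))}
  have hle : Algebra.adjoin ℂ {g | ∃ (k : ℕ) (i : Fin r), g = Dop^[k] (Φ i)} ≤
      Algebra.adjoin ℂ S := by
    refine Algebra.adjoin_le ?_
    rintro _ ⟨k, i, rfl⟩
    rw [Dop_iterate_eq_factorial_smul (hΦ i)]
    exact Subalgebra.smul_mem _ (Algebra.subset_adjoin (s := S) ⟨k, i, rfl⟩) _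
  have hS {s : ℕ} (hs : s ≤ 1) : ∀ F ∈ S, ∀ G ∈ S, br b s F G = 0 := by
    rintro _ ⟨k, i, rfl⟩ _ ⟨l, j, rfl⟩
    exact br_coeff_evalCurrent_eq_zero b (hΦ i) (hΦ j) (hinv i) (hinv j) hs k l
  intro f hf g hg
  exact ⟨br_eq_zero_of_mem_adjoin b 0 (hS zero_le_one) f (hle hf) g (hle hg),
    br_eq_zero_of_mem_adjoin b 1 (hS le_rfl) f (hle hf) g (hle hg)⟩

/-- Let `𝔤` be a finite-dimensional complex reductive Lie
algebra and `Φ₁, …, Φ_r` free generators of the algebra of adjoint invariants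
`S(𝔤)^𝔤 ⊆ S(𝔤) ⊆ S(𝔤[t])`.  The universal Gaudin subalgebra `A_𝔤`, generated
by all `Dᵏ Φᵢ`, is Poisson commutative for both brackets
`{x[n],y[m]}₀ = [x,y][n+m]` and `{x[n],y[m]}₁ = [x,y][n+m+1]`. -/
theorem statement7 {ι L : Type*} [Fintype ι] [DecidableEq ι]
    [LieRing L] [LieAlgebra ℂ L] (b : Module.Basis ι ℂ L)
    (r : ℕ) (Φ : Fin r → MvPolynomial (ι × ℕ) ℂ)
    (hdeg : ∀ i, ∀ p ∈ (Φ i).vars, p.2 = 0)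
    (hinv : ∀ i (x : L), lact b x (Φ i) = 0)
    (hind : AlgebraicIndependent ℂ Φ)
    (hgen : ∀ f : MvPolynomial (ι × ℕ) ℂ, (∀ p ∈ f.vars, p.2 = 0) →
      (∀ x : L, lact b x f = 0) → f ∈ Algebra.adjoin ℂ (Set.range Φ)) :
    ∀ f ∈ Algebra.adjoin ℂ
        {g : MvPolynomial (ι × ℕ) ℂ | ∃ (k : ℕ) (i : Fin r), g = Dop^[k] (Φ i)},
      ∀ g ∈ Algebra.adjoin ℂ
        {g : MvPolynomial (ι × ℕ) ℂ | ∃ (k : ℕ) (i : Fin r), g = Dop^[k] (Φ i)},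
        br b 0 f g = 0 ∧ br b 1 f g = 0 :=
  statement7_general b r Φ hdeg hinv
end
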